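/- arXiv:2509.04211 — 2 statements merged into one kernel-verified Lean document; each statement's English description precedes it below -/
import Mathlib

section
/- Let k ≥ 1 and n be positive integers with k·3^{k+1} ≤ n. Let a_1 ≤ a_2 ≤ … ≤ a_k be positive integers and set x_j = k + Σ_{i=1}^{j} (a_i − 1) for 0 ≤ j ≤ k, and assume x_k = n. Then there exists i ∈ {0, 1, …, k−1} such that a_j > 2^{j−i−1}·x_i for every j ∈ {i+1, …, k−1} and a_k > 3·2^{k−i−1}·x_i. -/
private lemma lemB (e : ℕ) : (e + 2) * 2 ^ e < 3 ^ (e + 1) := by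
  induction e with
  | zero => norm_num
  | succ e ih =>
    have h1 : (e + 3) * 2 ^ (e + 1) ≤ 3 * ((e + 2) * 2 ^ e) := by
      ring_nf; nlinarith [pow_pos (by norm_num : (0:ℕ) < 2) e]
    calc (e + 1 + 2) * 2 ^ (e + 1) ≤ 3 * ((e + 2) * 2 ^ e) := h1
      _ < 3 * 3 ^ (e + 1) := by omega
      _ = 3 ^ (e + 2) := by ring

private lemma lemA (e : ℕ) : (e + 1) * 2 ^ e + 1 ≤ 3 ^ (e + 1) := by
  have h2 : (1:ℕ) ≤ 2 ^ e := Nat.one_le_two_pow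
  have := lemB e
  nlinarith

private lemma lemC (e : ℕ) : 3 * ((e + 1) * 2 ^ e) + 1 < 3 ^ (e + 2) := by
  have h := lemA e
  have h3 : 3 * ((e + 1) * 2 ^ e + 1) ≤ 3 * 3 ^ (e + 1) := by omega
  calc 3 * ((e + 1) * 2 ^ e) + 1 < 3 * ((e + 1) * 2 ^ e + 1) := by omega
    _ ≤ 3 * 3 ^ (e + 1) := h3
    _ = 3 ^ (e + 2) := by ring

/-- Arithmetic core of the lower-bound theorem: given `k ≥ 1` sorted positive gap lengths
`a 1 ≤ a 2 ≤ … ≤ a k` with partial sums `x j = k + Σ_{i=1}^{j} (a i − 1)` and `x k = n`,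
if `k·3^(k+1) ≤ n` then some `i ∈ {0, …, k−1}` satisfies `a j > 2^(j−i−1)·x i` for all
`j ∈ {i+1, …, k−1}` together with `a k > 3·2^(k−i−1)·x i`. -/
theorem exists_good_index (k n : ℕ) (hk : 1 ≤ k) (hn : 0 < n)
    (hkn : k * 3 ^ (k + 1) ≤ n)
    (a : ℕ → ℕ)
    (ha_pos : ∀ j : ℕ, 1 ≤ j → j ≤ k → 0 < a j)
    (ha_mono : ∀ i j : ℕ, 1 ≤ i → i ≤ j → j ≤ k → a i ≤ a j)
    (x : ℕ → ℕ) (hx : ∀ j : ℕ, x j = k + ∑ i ∈ Finset.Icc 1 j, (a i - 1))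
    (hxk : x k = n) :
    ∃ i : ℕ, i < k ∧
      (∀ j : ℕ, i + 1 ≤ j → j ≤ k - 1 → 2 ^ (j - i - 1) * x i < a j) ∧
      3 * 2 ^ (k - i - 1) * x i < a k := by
  classical
  set S : Finset ℕ := (Finset.range k).filter (fun i => x i ≤ k * 3 ^ i) with hS
  have h0S : 0 ∈ S := by
    simp only [hS, Finset.mem_filter, Finset.mem_range]
    refine ⟨hk, ?_⟩
    rw [hx 0]
    simp
  have hSne : S.Nonempty := ⟨0, h0S⟩
  set i := S.max' hSne with hi
  have hiS : i ∈ S := S.max'_mem hSne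
  have hik : i < k := (Finset.mem_filter.mp hiS).1 |> Finset.mem_range.mp
  have hxi : x i ≤ k * 3 ^ i := (Finset.mem_filter.mp hiS).2
  have hxipos : 0 < x i := by rw [hx i]; omega
  have hmax : ∀ j, i < j → j < k → k * 3 ^ j < x j := by
    intro j hij hjk
    by_contra h
    push_neg at h
    have hjS : j ∈ S := by
      simp only [hS, Finset.mem_filter, Finset.mem_range]; exact ⟨hjk, h⟩
    exact absurd (S.le_max' j hjS) (by omega)
  have key : ∀ j, i < j → j ≤ k → x j ≤ x i + (j - i) * a j := by
    intro j hij hjk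
    rw [hx j, hx i]
    have hIcc : ∀ m : ℕ, Finset.Icc 1 m = Finset.Ioc 0 m := by
      intro m; rw [← Finset.Icc_add_one_left_eq_Ioc]; rfl
    rw [hIcc j, hIcc i]
    have hsplit : ∑ m ∈ Finset.Ioc 0 i, (a m - 1) + ∑ m ∈ Finset.Ioc i j, (a m - 1)
        = ∑ m ∈ Finset.Ioc 0 j, (a m - 1) :=
      Finset.sum_Ioc_consecutive (fun m => a m - 1) (Nat.zero_le i) hij.le
    have hbound : ∑ m ∈ Finset.Ioc i j, (a m - 1) ≤ (j - i) * a j := by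
      have h1 : ∑ m ∈ Finset.Ioc i j, (a m - 1) ≤ (Finset.Ioc i j).card • a j := by
        refine Finset.sum_le_card_nsmul _ _ _ ?_
        intro m hm
        rw [Finset.mem_Ioc] at hm
        have h1m : 1 ≤ m := by omega
        have := ha_mono m j h1m hm.2 hjk
        omega
      simpa [Nat.card_Ioc, smul_eq_mul] using h1
    omega
  refine ⟨i, hik, ?_, ?_⟩
  · intro j hj1 hj2
    have hjk : j < k := by omega
    have hij : i < j := by omega
    set d := j - i with hd
    have hd1 : 1 ≤ d := by omega
    obtain ⟨e, he⟩ : ∃ e, d = e + 1 := ⟨d - 1, by omega⟩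
    have h1 : k * 3 ^ j < x j := hmax j hij hjk
    have h2 : x j ≤ x i + d * a j := key j hij (by omega)
    have hA : (d * 2 ^ (d - 1) + 1) * x i ≤ 3 ^ d * x i := by
      have hle : d * 2 ^ (d - 1) + 1 ≤ 3 ^ d := by rw [he]; simpa using lemA e
      exact Nat.mul_le_mul_right _ hle
    have hB : 3 ^ d * x i ≤ 3 ^ d * (k * 3 ^ i) := Nat.mul_le_mul_left _ hxi
    have hdi : d + i = j := by omega
    have hC : 3 ^ d * (k * 3 ^ i) = k * 3 ^ j := by
      calc 3 ^ d * (k * 3 ^ i) = k * 3 ^ (d + i) := by rw [pow_add]; ring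
        _ = k * 3 ^ j := by rw [hdi]
    have hchain : (d * 2 ^ (d - 1) + 1) * x i < x i + d * a j := by
      calc (d * 2 ^ (d - 1) + 1) * x i ≤ 3 ^ d * x i := hA
        _ ≤ k * 3 ^ j := by rw [← hC]; exact hB
        _ < x j := h1
        _ ≤ x i + d * a j := h2
    have heq : (d * 2 ^ (d - 1) + 1) * x i = d * (2 ^ (d - 1) * x i) + x i := by ring
    rw [heq] at hchain
    have hfin : d * (2 ^ (d - 1) * x i) < d * a j := by omega
    exact Nat.lt_of_mul_lt_mul_left hfin
  · set d := k - i with hd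
    have hd1 : 1 ≤ d := by omega
    obtain ⟨e, he⟩ : ∃ e, d = e + 1 := ⟨d - 1, by omega⟩
    have h2 : x k ≤ x i + d * a k := key k hik le_rfl
    have hlc : 3 * (d * 2 ^ (d - 1)) + 1 < 3 ^ (d + 1) := by
      rw [he]; simpa using lemC e
    have hA : (3 * (d * 2 ^ (d - 1)) + 1) * x i < 3 ^ (d + 1) * x i :=
      Nat.mul_lt_mul_of_lt_of_le hlc le_rfl hxipos
    have hB : 3 ^ (d + 1) * x i ≤ 3 ^ (d + 1) * (k * 3 ^ i) := Nat.mul_le_mul_left _ hxi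
    have hdi : d + 1 + i = k + 1 := by omega
    have hC : 3 ^ (d + 1) * (k * 3 ^ i) = k * 3 ^ (k + 1) := by
      calc 3 ^ (d + 1) * (k * 3 ^ i) = k * 3 ^ (d + 1 + i) := by rw [pow_add]; ring
        _ = k * 3 ^ (k + 1) := by rw [hdi]
    have hchain : (3 * (d * 2 ^ (d - 1)) + 1) * x i < x i + d * a k := by
      calc (3 * (d * 2 ^ (d - 1)) + 1) * x i < 3 ^ (d + 1) * x i := hA
        _ ≤ k * 3 ^ (k + 1) := by rw [← hC]; exact hB
        _ ≤ n := hkn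
        _ = x k := hxk.symm
        _ ≤ x i + d * a k := h2
    have heq : (3 * (d * 2 ^ (d - 1)) + 1) * x i = d * (3 * 2 ^ (d - 1) * x i) + x i := by ring
    rw [heq] at hchain
    have hfin : d * (3 * 2 ^ (d - 1) * x i) < d * a k := by omega
    exact Nat.lt_of_mul_lt_mul_left hfin
end

section
/- Let A, B, C, D be four points in ℝ² that are the vertices, in counterclockwise order, of a strictly convex quadrilateral (no three of the four points collinear). Let C' be a point in the open segment (B, C) and let D' be a point in the open segment (A, D). Then A, B, C', D' are the vertices, in counterclockwise order, of a strictly convex quadrilateral. -/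
open Set

/-- Points of the plane. -/
abbrev Pt := ℝ × ℝ

/-- `p`, `q`, `r` make a strict left turn (are positively oriented). -/
def Ccw (p q r : Pt) : Prop :=
  0 < (q.1 - p.1) * (r.2 - p.2) - (q.2 - p.2) * (r.1 - p.1)

/-- `A`, `B`, `C`, `D` are the vertices, in counterclockwise order, of a strictly convex
quadrilateral (no three of the four points collinear): each triple of consecutive
vertices is positively oriented. -/
def IsConvexQuadCCW (A B C D : Pt) : Prop :=
  Ccw A B C ∧ Ccw B C D ∧ Ccw C D A ∧ Ccw D A B

/-- If `A B C D` is a strictly convex quadrilateral in counterclockwise order, `C'` lies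
in the open segment `(B, C)` and `D'` lies in the open segment `(A, D)`, then
`A B C' D'` is again a strictly convex quadrilateral in counterclockwise order. -/
theorem convexQuad_of_points_on_sides (A B C D C' D' : Pt)
    (h : IsConvexQuadCCW A B C D)
    (hC' : C' ∈ openSegment ℝ B C) (hD' : D' ∈ openSegment ℝ A D) :
    IsConvexQuadCCW A B C' D' := by
  obtain ⟨a, b, ha, hb, hab, rfl⟩ := hC'
  obtain ⟨s, t, hs, ht, hst, rfl⟩ := hD'
  obtain ⟨h1, h2, h3, h4⟩ := h
  simp only [Ccw, IsConvexQuadCCW, Prod.fst_add, Prod.snd_add, Prod.smul_fst,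
    Prod.smul_snd, smul_eq_mul] at *
  have ha' : a = 1 - b := by linarith
  have hs' : s = 1 - t := by linarith
  subst ha' hs'
  refine ⟨?_, ?_, ?_, ?_⟩
  · nlinarith [mul_pos hb h1]
  · nlinarith [mul_pos (mul_pos hb hs) h1, mul_pos (mul_pos hb ht) h2]
  · nlinarith [mul_pos (mul_pos ha ht) h4, mul_pos (mul_pos hb ht) h3]
  · nlinarith [mul_pos ht h4]
end
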